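/- arXiv:1603.05182 — 2 statements merged into one kernel-verified Lean document; each statement's English description precedes it below -/
import Mathlib

section
/- For every symmetric operator O on H_m, the intertwining identity 𝒢[O] ∘ G = |S| · (G ∘ O) holds, where |S| is the cardinality of the symmetry group S. -/
set_option linter.unusedSectionVars false

noncomputable section

namespace GaugingFractal

/-- The sign `(-1)^t` attached to a `ZMod 2` exponent. -/
def sgn (t : ZMod 2) : ℂ := (-1 : ℂ) ^ t.val

lemma sgn_mul_self (t : ZMod 2) : sgn t * sgn t = 1 := by
  unfold sgn
  rw [← pow_add, ← two_mul, pow_mul]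
  norm_num

lemma zmodfun_add_self {K : Type*} (k : K → ZMod 2) : k + k = 0 := by
  funext j
  exact CharTwo.add_self_eq_zero _

/-- Hilbert space of qubits labelled by a finite set `K`; the computational basis
vector `e_a` is indexed by a pattern `a : K → ZMod 2`. -/
abbrev HS (K : Type*) := EuclideanSpace ℂ (K → ZMod 2)

section Single
variable {K : Type*} [Fintype K] [DecidableEq K]

/-- Pauli X operator: `X(p) e_a = e_{a+p}`. -/
def XOp (p : K → ZMod 2) : HS K →ₗ[ℂ] HS K where
  toFun ψ := WithLp.toLp 2 (fun a => ψ (a + p))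
  map_add' _ _ := rfl
  map_smul' _ _ := rfl

/-- Pauli Z operator: `Z(p) e_a = (-1)^{Σ_i p i * a i} e_a`. -/
def ZOp (p : K → ZMod 2) : HS K →ₗ[ℂ] HS K where
  toFun ψ := WithLp.toLp 2 (fun a => sgn (∑ i, p i * a i) * ψ a)
  map_add' ψ φ := by
    ext a
    exact mul_add _ _ _
  map_smul' c ψ := by
    ext a
    simp only [RingHom.id_apply, PiLp.smul_apply, smul_eq_mul]
    ring

end Single

section Pair

variable {I J : Type*} [Fintype I] [DecidableEq I] [Fintype J] [DecidableEq J]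

/-- Hilbert space of the matter qubits (labelled by `I`) tensored with the gauge
qubits (labelled by `J`): the computational basis vector indexed by `(a, b)`
realizes the tensor product `e_a ⊗ f_b`. -/
abbrev HS2 (I J : Type*) := EuclideanSpace ℂ ((I → ZMod 2) × (J → ZMod 2))

/-- `X(p) ⊗ X_g(q)` on `H_m ⊗ H_g`. -/
def XXOp (p : I → ZMod 2) (q : J → ZMod 2) : HS2 I J →ₗ[ℂ] HS2 I J where
  toFun ψ := WithLp.toLp 2 (fun ab => ψ (ab.1 + p, ab.2 + q))
  map_add' _ _ := rfl
  map_smul' _ _ := rfl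

/-- `X(p) ⊗ Z_g(q)` on `H_m ⊗ H_g`. -/
def XZOp (p : I → ZMod 2) (q : J → ZMod 2) : HS2 I J →ₗ[ℂ] HS2 I J where
  toFun ψ := WithLp.toLp 2 (fun ab => sgn (∑ j, q j * ab.2 j) * ψ (ab.1 + p, ab.2))
  map_add' ψ φ := by
    ext ab
    exact mul_add _ _ _
  map_smul' c ψ := by
    ext ab
    simp only [RingHom.id_apply, PiLp.smul_apply, smul_eq_mul]
    ring

/-- `Z(p) ⊗ X_g(q)` on `H_m ⊗ H_g`. -/
def ZXOp (p : I → ZMod 2) (q : J → ZMod 2) : HS2 I J →ₗ[ℂ] HS2 I J where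
  toFun ψ := WithLp.toLp 2 (fun ab => sgn (∑ i, p i * ab.1 i) * ψ (ab.1, ab.2 + q))
  map_add' ψ φ := by
    ext ab
    exact mul_add _ _ _
  map_smul' c ψ := by
    ext ab
    simp only [RingHom.id_apply, PiLp.smul_apply, smul_eq_mul]
    ring

/-- The flux operator `1 ⊗ Z_g(k)` on `H_m ⊗ H_g`. -/
def IZOp (k : J → ZMod 2) : HS2 I J →ₗ[ℂ] HS2 I J := XZOp 0 k

variable (A : J → Finset I)

/-- The boundary map `∂ : (I → ZMod 2) → (J → ZMod 2)`, `(∂p)(j) = Σ_{i ∈ A j} p(i)`. -/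
def bnd (p : I → ZMod 2) : J → ZMod 2 := fun j => ∑ i ∈ A j, p i

/-- The coboundary map `δ : (J → ZMod 2) → (I → ZMod 2)`, `(δk)(i) = Σ_{j : i ∈ A j} k(j)`. -/
def cobnd (k : J → ZMod 2) : I → ZMod 2 :=
  fun i => ∑ j ∈ Finset.univ.filter (fun j => i ∈ A j), k j

/-- The indicator pattern `χ_i` of a matter qubit `i`. -/
def chi (i : I) : I → ZMod 2 := Pi.single i 1

/-- The indicator pattern `κ_j` of a gauge qubit `j`. -/
def kap (j : J) : J → ZMod 2 := Pi.single j 1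

/-- The local gauge constraint `C_i = X(χ_i) ⊗ X_g(∂χ_i)`. -/
def C (i : I) : HS2 I J →ₗ[ℂ] HS2 I J := XXOp (chi i) (bnd A (chi i))

lemma XXOp_mul (p p' : I → ZMod 2) (q q' : J → ZMod 2) :
    (XXOp p q : Module.End ℂ (HS2 I J)) * XXOp p' q' = XXOp (p + p') (q + q') := by
  apply LinearMap.ext
  intro ψ
  ext ab
  show ψ (ab.1 + p + p', ab.2 + q + q') = ψ (ab.1 + (p + p'), ab.2 + (q + q'))
  rw [add_assoc, add_assoc]

lemma C_commute (i i' : I) : Commute (C A i) (C A i') := by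
  show C A i * C A i' = C A i' * C A i
  unfold C
  rw [XXOp_mul, XXOp_mul, add_comm (chi i) (chi i'),
    add_comm (bnd A (chi i)) (bnd A (chi i'))]

/-- The product of gauge constraints `C^s = Π_{i : s i = 1} C_i`. -/
def Cprod (s : I → ZMod 2) : Module.End ℂ (HS2 I J) :=
  (Finset.univ.filter fun i => s i = 1).noncommProd (fun i => C A i)
    (fun i _ j _ _ => C_commute A i j)

lemma Chalf_commute (i i' : I) :
    Commute ((2 : ℂ)⁻¹ • (1 + C A i)) ((2 : ℂ)⁻¹ • (1 + C A i')) := by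
  have h : Commute (1 + C A i) (1 + C A i') :=
    (Commute.one_left _).add_left ((Commute.one_right _).add_right (C_commute A i i'))
  exact (h.smul_left _).smul_right _

/-- The projector `P = Π_{i ∈ I} (1 + C_i)/2` onto the gauge invariant subspace. -/
def Pproj : Module.End ℂ (HS2 I J) :=
  Finset.univ.noncommProd (fun i => (2 : ℂ)⁻¹ • (1 + C A i))
    (fun i _ j _ _ => Chalf_commute A i j)

/-- `ψ ↦ ψ ⊗ f_0`, the inclusion `1_m ⊗ |f_0⟩ : H_m → H_m ⊗ H_g` determined by the
all-zeros gauge basis vector `f_0`. -/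
def incl : HS I →ₗ[ℂ] HS2 I J where
  toFun ψ := WithLp.toLp 2 (fun ab => if ab.2 = 0 then ψ ab.1 else 0)
  map_add' ψ φ := by
    ext ab
    by_cases h : ab.2 = 0 <;> simp [h]
  map_smul' c ψ := by
    ext ab
    by_cases h : ab.2 = 0 <;> simp [h]

/-- The compression `1_m ⊗ ⟨f_0| : H_m ⊗ H_g → H_m`. -/
def res0 : HS2 I J →ₗ[ℂ] HS I where
  toFun ψ := WithLp.toLp 2 (fun a => ψ (a, 0))
  map_add' _ _ := rfl
  map_smul' _ _ := rfl

/-- The state gauging map `G ψ = P (ψ ⊗ f_0)`. -/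
def Gmap : HS I →ₗ[ℂ] HS2 I J := Pproj A ∘ₗ incl

/-- The operator gauging map `𝒢[O] = Σ_{s : I → ZMod 2} C^s (O ⊗ |f_0⟩⟨f_0|) C^s`,
where `O ⊗ |f_0⟩⟨f_0| = incl ∘ O ∘ res0`. -/
def gaugeOp (O : Module.End ℂ (HS I)) : Module.End ℂ (HS2 I J) :=
  ∑ s : I → ZMod 2, Cprod A s * (incl ∘ₗ O ∘ₗ res0) * Cprod A s

/-- The joint fixed subspace `{v | C_i v = v for all i}` of the gauge constraints. -/
def fixedSub : Submodule ℂ (HS2 I J) where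
  carrier := {v | ∀ i, C A i v = v}
  add_mem' := by
    intro x y hx hy i
    rw [map_add, hx i, hy i]
  zero_mem' := by
    intro i
    simp
  smul_mem' := by
    intro c x hx i
    rw [map_smul, hx i]

/-- The symmetric subspace `{ψ | X(s) ψ = ψ for all s with ∂s = 0}` of the matter space. -/
def symmSub : Submodule ℂ (HS I) where
  carrier := {ψ | ∀ s, bnd A s = 0 → XOp s ψ = ψ}
  add_mem' := by
    intro x y hx hy s hs
    rw [map_add, hx s hs, hy s hs]
  zero_mem' := by
    intro s hs
    simp
  smul_mem' := by
    intro c x hx s hs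
    rw [map_smul, hx s hs]

/-- The cluster stabilizer `K_i = X(χ_i) ⊗ Z_g(∂χ_i)`. -/
def Kst (i : I) : Module.End ℂ (HS2 I J) := XZOp (chi i) (bnd A (chi i))

/-- The cluster stabilizer `L_j = Z(δκ_j) ⊗ X_g(κ_j)`. -/
def Lst (j : J) : Module.End ℂ (HS2 I J) := ZXOp (cobnd A (kap j)) (kap j)

/-- The disentangling circuit of controlled-X gates from each matter qubit to its
adjacent gauge qubits: `V (e_a ⊗ f_b) = e_a ⊗ f_{b + ∂a}`. -/
def Vequiv : HS2 I J ≃ₗ[ℂ] HS2 I J where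
  toFun ψ := WithLp.toLp 2 (fun ab => ψ (ab.1, ab.2 + bnd A ab.1))
  invFun ψ := WithLp.toLp 2 (fun ab => ψ (ab.1, ab.2 + bnd A ab.1))
  map_add' _ _ := rfl
  map_smul' _ _ := rfl
  left_inv ψ := by
    ext ab
    show ψ (ab.1, ab.2 + bnd A ab.1 + bnd A ab.1) = ψ ab
    rw [add_assoc, zmodfun_add_self, add_zero]
  right_inv ψ := by
    ext ab
    show ψ (ab.1, ab.2 + bnd A ab.1 + bnd A ab.1) = ψ ab
    rw [add_assoc, zmodfun_add_self, add_zero]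

/-- The circuit of controlled-Z gates along the edges of the bipartite graph:
`U (e_a ⊗ f_b) = (-1)^{Σ_j (∂a)(j)·b(j)} e_a ⊗ f_b`. -/
def Uequiv : HS2 I J ≃ₗ[ℂ] HS2 I J where
  toFun ψ := WithLp.toLp 2 (fun ab => sgn (∑ j, bnd A ab.1 j * ab.2 j) * ψ ab)
  invFun ψ := WithLp.toLp 2 (fun ab => sgn (∑ j, bnd A ab.1 j * ab.2 j) * ψ ab)
  map_add' ψ φ := by
    ext ab
    exact mul_add _ _ _
  map_smul' c ψ := by
    ext ab
    simp only [RingHom.id_apply, PiLp.smul_apply, smul_eq_mul]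
    ring
  left_inv ψ := by
    ext ab
    show sgn _ * (sgn _ * ψ ab) = ψ ab
    rw [← mul_assoc, sgn_mul_self, one_mul]
  right_inv ψ := by
    ext ab
    show sgn _ * (sgn _ * ψ ab) = ψ ab
    rw [← mul_assoc, sgn_mul_self, one_mul]

end Pair

end GaugingFractal

/-!
The operators `C^s = X(s) ⊗ X_g(∂s)` form a representation of `I → ZMod 2`, and expanding the
product gives `2^|I| P = ∑_t C^t`. Compressing `C^u` to the gauge vacuum `f_0` gives `X(u)` when
`∂u = 0` and `0` otherwise. Hence the `s`-th term of `𝒢[O]` kills `C^t (ψ ⊗ f_0)` unless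
`s + t ∈ S`, and then, since `O` commutes with `X(s + t)`, maps it to `C^t (Oψ ⊗ f_0)`. Summing over
`s` gives `|S| C^t (Oψ ⊗ f_0)`, and summing over `t` gives `2^|I| |S| G (Oψ)`.
-/

theorem AddMonoidAlgebra.prod_one_add_single_pi_single {ι R : Type*} [Fintype ι]
    [DecidableEq ι] [CommSemiring R] :
    ∏ i : ι, (1 + AddMonoidAlgebra.single (Pi.single i 1 : ι → ZMod 2) (1 : R))
      = ∑ s : ι → ZMod 2, AddMonoidAlgebra.single s 1 := by
  have hfactor : ∀ i : ι, 1 + AddMonoidAlgebra.single (Pi.single i 1 : ι → ZMod 2) (1 : R)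
      = ∑ z : ZMod 2, AddMonoidAlgebra.single (Pi.single i z) 1 := by
    intro i
    rw [show (Finset.univ : Finset (ZMod 2)) = {0, 1} from rfl,
      Finset.sum_pair zero_ne_one, Pi.single_zero, AddMonoidAlgebra.one_def]
  simp_rw [hfactor, Finset.prod_univ_sum, Fintype.piFinset_univ, AddMonoidAlgebra.prod_single,
    Finset.univ_sum_single, Finset.prod_const_one]

section SumComp

variable {R M N P ι : Type*} [CommSemiring R] [AddCommMonoid M] [AddCommMonoid N]
  [AddCommMonoid P] [Module R M] [Module R N] [Module R P]

theorem LinearMap.finsetSum_comp (s : Finset ι) (f : ι → N →ₗ[R] P) (g : M →ₗ[R] N) :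
    (∑ i ∈ s, f i) ∘ₗ g = ∑ i ∈ s, f i ∘ₗ g :=
  map_sum (LinearMap.lcomp R P g) f s

theorem LinearMap.comp_finsetSum (s : Finset ι) (f : N →ₗ[R] P) (g : ι → M →ₗ[R] N) :
    f ∘ₗ (∑ i ∈ s, g i) = ∑ i ∈ s, f ∘ₗ g i :=
  map_sum (LinearMap.llcomp R M N P f) g s

end SumComp

namespace GaugingFractal

section GaugeRep

variable {I J : Type*}

@[simp]
lemma XOp_apply (p : I → ZMod 2) (ψ : HS I) (a : I → ZMod 2) : XOp p ψ a = ψ (a + p) := rfl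

@[simp]
lemma XXOp_apply (p : I → ZMod 2) (q : J → ZMod 2) (ψ : HS2 I J)
    (ab : (I → ZMod 2) × (J → ZMod 2)) :
    XXOp p q ψ ab = ψ (ab.1 + p, ab.2 + q) := rfl

lemma bnd_add (A : J → Finset I) (p q : I → ZMod 2) : bnd A (p + q) = bnd A p + bnd A q := by
  funext j
  exact Finset.sum_add_distrib

lemma bnd_zero (A : J → Finset I) : bnd A (0 : I → ZMod 2) = 0 := by
  funext j
  exact Finset.sum_const_zero

def gaugeRep (A : J → Finset I) : AddChar (I → ZMod 2) (Module.End ℂ (HS2 I J)) where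
  toFun s := XXOp s (bnd A s)
  map_zero_eq_one' := by
    ext ψ ab
    simp [bnd_zero]
  map_add_eq_mul' p q := by
    ext ψ ab
    simp [bnd_add, add_assoc]

end GaugeRep

section Compression

variable {I J : Type*} [Fintype J]

@[simp]
lemma incl_apply (ψ : HS I) (ab : (I → ZMod 2) × (J → ZMod 2)) :
    incl ψ ab = if ab.2 = 0 then ψ ab.1 else 0 := rfl

@[simp]
lemma res0_apply (ψ : HS2 I J) (a : I → ZMod 2) : res0 ψ a = ψ (a, 0) := rfl

lemma res0_comp_XXOp_comp_incl (p : I → ZMod 2) (q : J → ZMod 2) :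
    res0 ∘ₗ XXOp p q ∘ₗ incl = if q = 0 then XOp p else 0 := by
  ext ψ a
  split_ifs with hq <;> simp [hq]

lemma XXOp_zero_comp_incl (p : I → ZMod 2) :
    XXOp p (0 : J → ZMod 2) ∘ₗ incl = incl ∘ₗ XOp p := by
  ext ψ ab
  simp

def IsSymmetricOp (A : J → Finset I) (O : Module.End ℂ (HS I)) : Prop :=
  ∀ s : I → ZMod 2, bnd A s = 0 → O * XOp s = XOp s * O

lemma gaugeRep_mul_compress_mul_gaugeRep_comp_incl {A : J → Finset I} {O : Module.End ℂ (HS I)}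
    (hO : IsSymmetricOp A O) (s t : I → ZMod 2) :
    (gaugeRep A s * (incl ∘ₗ O ∘ₗ res0) * gaugeRep A s) ∘ₗ gaugeRep A t ∘ₗ incl
      = if bnd A (s + t) = 0 then gaugeRep A t ∘ₗ incl ∘ₗ O else 0 := by
  have hcompress : res0 ∘ₗ gaugeRep A (s + t) ∘ₗ incl
      = if bnd A (s + t) = 0 then XOp (s + t) else 0 :=
    res0_comp_XXOp_comp_incl _ _
  calc (gaugeRep A s * (incl ∘ₗ O ∘ₗ res0) * gaugeRep A s) ∘ₗ gaugeRep A t ∘ₗ incl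
      = gaugeRep A s ∘ₗ incl ∘ₗ O ∘ₗ (res0 ∘ₗ gaugeRep A (s + t) ∘ₗ incl) := by
        rw [AddChar.map_add_eq_mul]
        rfl
    _ = _ := by
      rw [hcompress]
      split_ifs with h
      · have hW : gaugeRep A (s + t) ∘ₗ incl = incl ∘ₗ XOp (s + t) := by
          rw [← XXOp_zero_comp_incl, ← h]
          rfl
        have hcomm := hO _ h
        rw [Module.End.mul_eq_comp, Module.End.mul_eq_comp] at hcomm
        calc gaugeRep A s ∘ₗ incl ∘ₗ O ∘ₗ XOp (s + t)
            = gaugeRep A s ∘ₗ (incl ∘ₗ XOp (s + t)) ∘ₗ O := by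
              rw [hcomm]
              rfl
          _ = gaugeRep A (s + (s + t)) ∘ₗ incl ∘ₗ O := by
              rw [← hW, AddChar.map_add_eq_mul (gaugeRep A) s (s + t)]
              rfl
          _ = gaugeRep A t ∘ₗ incl ∘ₗ O := by
              rw [← add_assoc, zmodfun_add_self, zero_add]
      · simp

end Compression

lemma sum_chi_filter_eq_one {I : Type*} [Fintype I] [DecidableEq I] (s : I → ZMod 2) :
    ∑ i ∈ Finset.univ.filter (fun i => s i = 1), chi i = s := by
  have hbit : ∀ z : ZMod 2, z = 0 ∨ z = 1 := by decide
  conv_rhs => rw [← Finset.univ_sum_single s]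
  rw [Finset.sum_filter]
  refine Finset.sum_congr rfl fun i _ => ?_
  rcases hbit (s i) with h | h <;> simp [h, chi]

section Gauging

variable {I J : Type*} [Fintype I] [DecidableEq I] [Fintype J] [DecidableEq J]

lemma Cprod_eq_gaugeRep (A : J → Finset I) (s : I → ZMod 2) : Cprod A s = gaugeRep A s := by
  have h := Finset.map_noncommProd (Finset.univ.filter fun i => s i = 1)
    (fun i => Multiplicative.ofAdd (chi i)) (fun _ _ _ _ _ => Commute.all _ _)
    (gaugeRep A).toMonoidHom
  rw [Finset.noncommProd_eq_prod, ← ofAdd_sum, sum_chi_filter_eq_one] at h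
  exact h.symm

/-- `P` is the image of `∏ i, (1 + χ_i) / 2` under the group-algebra extension of `gaugeRep`. -/
lemma two_pow_card_smul_Pproj (A : J → Finset I) :
    (2 : ℂ) ^ Fintype.card I • Pproj A = ∑ s, gaugeRep A s := by
  set Φ := AddMonoidAlgebra.lift ℂ (Module.End ℂ (HS2 I J)) (I → ZMod 2) (gaugeRep A).toMonoidHom
  have hΦ : ∀ s, Φ (AddMonoidAlgebra.single s 1) = gaugeRep A s := fun s => by
    rw [AddMonoidAlgebra.lift_single, one_smul]
    rfl
  have hP := Finset.map_noncommProd Finset.univ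
    (fun i => (2 : ℂ)⁻¹ • (1 + AddMonoidAlgebra.single (chi i) 1))
    (fun _ _ _ _ _ => Commute.all _ _) Φ
  simp only [map_smul, map_add, map_one, hΦ, Finset.noncommProd_eq_prod] at hP
  replace hP : Pproj A = Φ (∏ i, (2 : ℂ)⁻¹ • (1 + AddMonoidAlgebra.single (Pi.single i 1) 1)) :=
    hP.symm
  rw [hP, Finset.prod_smul, Finset.prod_const, Finset.card_univ, map_smul, smul_smul,
    ← mul_pow, mul_inv_cancel₀ two_ne_zero, one_pow, one_smul,
    AddMonoidAlgebra.prod_one_add_single_pi_single, map_sum]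
  simp only [hΦ]

lemma gaugeOp_comp_gaugeRep_comp_incl {A : J → Finset I} {O : Module.End ℂ (HS I)}
    (hO : IsSymmetricOp A O) (t : I → ZMod 2) :
    gaugeOp A O ∘ₗ gaugeRep A t ∘ₗ incl
      = (Nat.card {s : I → ZMod 2 // bnd A s = 0} : ℂ) • (gaugeRep A t ∘ₗ incl ∘ₗ O) := by
  calc gaugeOp A O ∘ₗ gaugeRep A t ∘ₗ incl
      = ∑ s, if bnd A (s + t) = 0 then gaugeRep A t ∘ₗ incl ∘ₗ O else 0 := by
        rw [gaugeOp, LinearMap.finsetSum_comp]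
        simp only [Cprod_eq_gaugeRep, gaugeRep_mul_compress_mul_gaugeRep_comp_incl hO]
    _ = ∑ s, if bnd A s = 0 then gaugeRep A t ∘ₗ incl ∘ₗ O else 0 :=
        Fintype.sum_equiv (Equiv.addRight t) _ _ fun _ => rfl
    _ = _ := by
        rw [Finset.sum_ite, Finset.sum_const, Finset.sum_const_zero, add_zero,
          ← Nat.cast_smul_eq_nsmul ℂ, Nat.card_eq_fintype_card, Fintype.card_subtype]

/-- For every symmetric operator `O`, the intertwining identity
`𝒢[O] ∘ G = |S| · (G ∘ O)` holds. -/
theorem gaugeOp_intertwines (A : J → Finset I) (O : Module.End ℂ (HS I))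
    (hO : ∀ s : I → ZMod 2, bnd A s = 0 → O * XOp s = XOp s * O) :
    gaugeOp A O ∘ₗ Gmap A
      = (Nat.card {s : I → ZMod 2 // bnd A s = 0} : ℂ) • (Gmap A ∘ₗ O) := by
  apply smul_right_injective _ (pow_ne_zero (Fintype.card I) (two_ne_zero' ℂ))
  calc (2 : ℂ) ^ Fintype.card I • (gaugeOp A O ∘ₗ Gmap A)
      = gaugeOp A O ∘ₗ ((2 : ℂ) ^ Fintype.card I • Pproj A) ∘ₗ incl := by
        rw [Gmap, LinearMap.smul_comp, LinearMap.comp_smul]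
    _ = ∑ t, gaugeOp A O ∘ₗ gaugeRep A t ∘ₗ incl := by
        rw [two_pow_card_smul_Pproj, LinearMap.finsetSum_comp, LinearMap.comp_finsetSum]
    _ = ∑ t, (Nat.card {s : I → ZMod 2 // bnd A s = 0} : ℂ) • (gaugeRep A t ∘ₗ incl ∘ₗ O) :=
        Finset.sum_congr rfl fun t _ => gaugeOp_comp_gaugeRep_comp_incl hO t
    _ = (2 : ℂ) ^ Fintype.card I
          • ((Nat.card {s : I → ZMod 2 // bnd A s = 0} : ℂ) • (Gmap A ∘ₗ O)) := by
        rw [← Finset.smul_sum, smul_comm, Gmap, LinearMap.comp_assoc, ← LinearMap.smul_comp,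
          two_pow_card_smul_Pproj, LinearMap.finsetSum_comp]

end Gauging

end GaugingFractal
end
end

section
/- Flux operators commute with the gauged theory: if k : J → ZMod 2 satisfies δk = 0 (i.e. Σ_{j : i ∈ A j} k(j) = 0 for every i ∈ I), then (a) the flux operator 1 ⊗ Z_g(k) commutes with every gauge constraint C_i, (b) 1 ⊗ Z_g(k) commutes with 𝒢[O] for every linear operator O on H_m, and (c) (1 ⊗ Z_g(k)) ∘ G = G, so gauged states carry flat gauge connection. -/
set_option linter.unusedSectionVars false

noncomputable section

namespace GaugingFractal

section Pair

variable {I J : Type*} [Fintype I] [DecidableEq I] [Fintype J] [DecidableEq J]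

variable (A : J → Finset I)

/-! Since `∂` and `δ` are adjoint, `δk = 0` says that `k` pairs to zero with every `∂χ_i`, so
`Z_g(k)` commutes with `X_g(∂χ_i)`, hence with each `C_i`, with the products `C^s` and with `P`.
Moreover `Z_g(k)` acts trivially on the `f_0` sector, where `O ⊗ |f_0⟩⟨f_0|` and the input of `G`
live. -/

lemma sgn_zero : sgn 0 = 1 := by
  simp [sgn]

lemma sum_mul_bnd (k : J → ZMod 2) (p : I → ZMod 2) :
    ∑ j, k j * bnd A p j = ∑ i, cobnd A k i * p i := by
  simp only [bnd, cobnd, ← Finset.sum_ite_mem_eq (A _), Finset.mul_sum, Finset.sum_mul,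
    Finset.sum_filter]
  rw [Finset.sum_comm]
  refine Finset.sum_congr rfl fun i _ => Finset.sum_congr rfl fun j _ => ?_
  split_ifs <;> simp

lemma sum_mul_bnd_chi (k : J → ZMod 2) (i : I) :
    ∑ j, k j * bnd A (chi i) j = cobnd A k i := by
  simp [sum_mul_bnd, chi, Pi.single_apply]

lemma XZOp_commute_XXOp {p p' : I → ZMod 2} {q q' : J → ZMod 2}
    (h : ∑ j, q j * q' j = 0) :
    Commute (XZOp p q : Module.End ℂ (HS2 I J)) (XXOp p' q') := by
  refine LinearMap.ext fun ψ => ?_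
  ext ab
  show sgn (∑ j, q j * ab.2 j) * ψ (ab.1 + p + p', ab.2 + q')
      = sgn (∑ j, q j * (ab.2 + q') j) * ψ (ab.1 + p' + p, ab.2 + q')
  simp only [Pi.add_apply, mul_add, Finset.sum_add_distrib, h, add_zero, add_right_comm]

lemma IZOp_commute_C {k : J → ZMod 2} (hk : cobnd A k = 0) (i : I) :
    Commute (IZOp k : Module.End ℂ (HS2 I J)) (C A i) :=
  XZOp_commute_XXOp <| by rw [sum_mul_bnd_chi, hk, Pi.zero_apply]

lemma IZOp_commute_Cprod {k : J → ZMod 2} (hk : cobnd A k = 0) (s : I → ZMod 2) :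
    Commute (IZOp k : Module.End ℂ (HS2 I J)) (Cprod A s) :=
  Finset.noncommProd_commute _ _ _ _ fun i _ => IZOp_commute_C A hk i

lemma IZOp_commute_Pproj {k : J → ZMod 2} (hk : cobnd A k = 0) :
    Commute (IZOp k : Module.End ℂ (HS2 I J)) (Pproj A) :=
  Finset.noncommProd_commute _ _ _ _ fun i _ =>
    ((Commute.one_right _).add_right (IZOp_commute_C A hk i)).smul_right _

lemma IZOp_comp_incl (k : J → ZMod 2) : (IZOp k : HS2 I J →ₗ[ℂ] HS2 I J) ∘ₗ incl = incl := by
  refine LinearMap.ext fun ψ => ?_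
  ext ab
  show sgn (∑ j, k j * ab.2 j) * (if ab.2 = 0 then ψ (ab.1 + 0) else 0)
      = if ab.2 = 0 then ψ ab.1 else 0
  split_ifs with h
  · simp [h, sgn_zero]
  · rw [mul_zero]

lemma res0_comp_IZOp (k : J → ZMod 2) :
    (res0 : HS2 I J →ₗ[ℂ] HS I) ∘ₗ IZOp k = res0 := by
  refine LinearMap.ext fun ψ => ?_
  ext a
  show sgn (∑ j, k j * (0 : J → ZMod 2) j) * ψ (a + 0, 0) = ψ (a, 0)
  simp [sgn_zero]

lemma IZOp_commute_incl_comp_res0 (k : J → ZMod 2) (O : Module.End ℂ (HS I)) :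
    Commute (IZOp k : Module.End ℂ (HS2 I J)) (incl ∘ₗ O ∘ₗ res0) := by
  show IZOp k ∘ₗ incl ∘ₗ O ∘ₗ res0 = (incl ∘ₗ O ∘ₗ res0) ∘ₗ IZOp k
  rw [← LinearMap.comp_assoc, IZOp_comp_incl, LinearMap.comp_assoc, LinearMap.comp_assoc,
    res0_comp_IZOp]

/-- If `δk = 0` then the flux operator `1 ⊗ Z_g(k)` (a) commutes with every
gauge constraint `C_i`, (b) commutes with `𝒢[O]` for every operator `O`, and
(c) satisfies `(1 ⊗ Z_g(k)) ∘ G = G`. -/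
theorem flux_operators_commute (A : J → Finset I) (k : J → ZMod 2) (hk : cobnd A k = 0) :
    (∀ i : I, Commute (IZOp k : Module.End ℂ (HS2 I J)) (C A i))
    ∧ (∀ O : Module.End ℂ (HS I),
        Commute (IZOp k : Module.End ℂ (HS2 I J)) (gaugeOp A O))
    ∧ (IZOp k : Module.End ℂ (HS2 I J)) ∘ₗ Gmap A = Gmap A := by
  refine ⟨IZOp_commute_C A hk, fun O => ?_, ?_⟩
  · exact Commute.sum_right _ _ _ fun s _ =>
      ((IZOp_commute_Cprod A hk s).mul_right (IZOp_commute_incl_comp_res0 k O)).mul_right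
        (IZOp_commute_Cprod A hk s)
  · show (IZOp k * Pproj A) ∘ₗ incl = Pproj A ∘ₗ incl
    rw [(IZOp_commute_Pproj A hk).eq, Module.End.mul_eq_comp, LinearMap.comp_assoc,
      IZOp_comp_incl]

end Pair

end GaugingFractal
end
end
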